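/- arXiv:2312.15669 — 4 statements merged into one kernel-verified Lean document; each statement's English description precedes it below -/
import Mathlib

section
/- Let f be the Casoratian f = |0,1,…,N−1|_{[l1]} built from the vector ψ with entries ψ_j(n1,n2,l1,x) = ρ_j^+ e^{k_j x} k_j^{l1} (a1+k_j)^{n1}(a2+k_j)^{n2} + ρ_j^- e^{−k_j x} (−k_j)^{l1} (a1−k_j)^{n1}(a2−k_j)^{n2}. Then at every (n1,n2,l1,x): (i) f = |0,1,…,N−1|_{[x]} (the Wronskian in x) and f = |0,1,…,N−1|_{[n_σ]} for σ = 1,2; and (ii) g := |0,…,N−2,N|_{[l1]} satisfies g = |0,…,N−2,N|_{[x]} = ∂_x f and g = |0,…,N−2,N|_{[n_σ]} − a_σ N f for σ = 1,2. -/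
/-!
Write `binomialShift c s m = ∑ i ≤ m, C(m, i) c^(m-i) s i`, i.e. `((E + c)^m s) 0` for the shift `E`.
On the entries, a step in `n_σ` multiplies each exponential mode by `a_σ ± k_j = a_σ + (step in l1)`,
so `ψ(n_σ + m) = binomialShift a_σ (i ↦ ψ(l1 + i)) m`: the `n_σ`-Casoratian matrix is the
`l1`-Casoratian matrix times the upper unitriangular matrix `(C(m, i) a_σ^(m-i))`. This leaves `f`
unchanged; for `g` the last column picks up `N a_σ` times column `N - 1`, whence the term `a_σ N f`.
In `x`, `∂ₓ ψ(l1) = ψ(l1 + 1)`, so Wronskian and `l1`-Casoratian agree entrywise, and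
differentiating `f` column by column, every term but the one for the last column has two equal
columns, which leaves `g`.
-/

open Finset Matrix

section Binomial

variable {R : Type*} [CommRing R]

def binomialShift (c : R) (s : ℕ → R) (m : ℕ) : R :=
  ∑ i ∈ range (m + 1), (m.choose i : R) * c ^ (m - i) * s i

theorem binomialShift_add (c : R) (s t : ℕ → R) :
    binomialShift c (s + t) = binomialShift c s + binomialShift c t := by
  ext m
  simp only [binomialShift, Pi.add_apply, mul_add, sum_add_distrib]

theorem binomialShift_mul_pow (c r k : R) :
    binomialShift c (fun i => r * k ^ i) = fun m => r * (c + k) ^ m := by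
  ext m
  rw [binomialShift, add_comm c, add_pow, mul_sum]
  exact sum_congr rfl fun i _ => by ring

theorem binomialShift_succ (c : R) (s : ℕ → R) (q : ℕ) :
    binomialShift c s (q + 1) =
      s (q + 1) + ∑ i : Fin (q + 1), s i * (((q + 1).choose i : R) * c ^ (q + 1 - i)) := by
  rw [binomialShift, sum_range_succ, Fin.sum_univ_eq_sum_range
    (fun i => s i * (((q + 1).choose i : R) * c ^ (q + 1 - i)))]
  simp only [Nat.choose_self, Nat.cast_one, Nat.sub_self, pow_zero, one_mul]
  exact add_comm _ _ |>.trans (congrArg _ (sum_congr rfl fun i _ => by ring))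

def binomialMatrix (n : ℕ) (c : R) : Matrix (Fin n) (Fin n) R :=
  of fun i m => (m.1.choose i.1 : R) * c ^ (m.1 - i.1)

theorem binomialMatrix_isUpperTriangular (n : ℕ) (c : R) :
    (binomialMatrix n c).IsUpperTriangular := fun i m (h : m < i) => by
  simp [binomialMatrix, Nat.choose_eq_zero_of_lt (Fin.lt_def.mp h)]

theorem det_updateCol_last_binomialMatrix (q : ℕ) (c : R) (u : Fin (q + 1) → R) :
    ((binomialMatrix (q + 1) c).updateCol (Fin.last q) u).det = u (Fin.last q) := by
  have hT : ((binomialMatrix (q + 1) c).updateCol (Fin.last q) u).IsUpperTriangular :=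
    fun i m (h : m < i) => by
      rw [updateCol_ne (Fin.ne_last_of_lt h)]
      exact binomialMatrix_isUpperTriangular _ c h
  rw [det_of_isUpperTriangular hT, Fin.prod_univ_castSucc]
  simp [binomialMatrix, Fin.castSucc_ne_last]

theorem det_binomialMatrix (n : ℕ) (c : R) : (binomialMatrix n c).det = 1 := by
  rw [det_of_isUpperTriangular (binomialMatrix_isUpperTriangular n c)]
  simp [binomialMatrix]

variable {n : ℕ}

theorem of_binomialShift_eq_mul (c : R) (s : Fin n → ℕ → R) :
    (of fun j (m : Fin n) => binomialShift c (s j) m) =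
      (of fun j (m : Fin n) => s j m) * binomialMatrix n c := by
  ext j m
  simp only [of_apply, mul_apply, binomialShift, binomialMatrix]
  rw [Fin.sum_univ_eq_sum_range (fun i => s j i * ((m.1.choose i : R) * c ^ (m.1 - i)))]
  refine (sum_subset (range_subset_range.mpr m.2) fun i _ hi => ?_).trans
    (sum_congr rfl fun i _ => by ring)
  rw [Nat.choose_eq_zero_of_lt (not_lt.mp (mt mem_range.mpr hi))]
  simp

theorem det_of_binomialShift (c : R) (s : Fin n → ℕ → R) :
    (of fun j (m : Fin n) => binomialShift c (s j) m).det =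
      (of fun j (m : Fin n) => s j m).det := by
  rw [of_binomialShift_eq_mul, det_mul, det_binomialMatrix, mul_one]

theorem updateCol_last_mul_binomialMatrix {q : ℕ} (c : R) (A B : Matrix (Fin n) (Fin (q + 1)) R)
    (hAB : ∀ j (i : Fin q), A j i.castSucc = B j i.castSucc) (v : Fin n → R) :
    (A * binomialMatrix (q + 1) c).updateCol (Fin.last q) v =
      (B * binomialMatrix (q + 1) c).updateCol (Fin.last q) v := by
  ext j m
  rcases eq_or_ne m (Fin.last q) with rfl | hm
  · simp
  have hP : binomialMatrix (q + 1) c (Fin.last q) m = 0 :=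
    binomialMatrix_isUpperTriangular _ c (Fin.lt_last_iff_ne_last.mpr hm)
  simp only [updateCol_ne hm, mul_apply, Fin.sum_univ_castSucc, hP, mul_zero, hAB]

theorem det_of_binomialShift_gap (c : R) (s : Fin n → ℕ → R) :
    (of fun j (m : Fin n) => binomialShift c (s j) (if m.1 = n - 1 then n else m.1)).det =
      (of fun j (m : Fin n) => s j (if m.1 = n - 1 then n else m.1)).det +
        n * c * (of fun j (m : Fin n) => s j m).det := by
  cases n with
  | zero => simp [det_fin_zero]
  | succ q =>
  simp only [Nat.add_sub_cancel]
  set S : Matrix (Fin (q + 1)) (Fin (q + 1)) R := of fun j m => s j m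
  set P := binomialMatrix (q + 1) c
  set w : Fin (q + 1) → R := fun j => s j (q + 1)
  set b : Fin (q + 1) → R := fun i => ((q + 1).choose i : R) * c ^ (q + 1 - i)
  have hlast : ∀ m : Fin (q + 1), m.1 = q ↔ m = Fin.last q := by
    intro m; rw [Fin.ext_iff, Fin.val_last]
  have hG : (of fun j (m : Fin (q + 1)) => s j (if m.1 = q then q + 1 else m.1)) =
      S.updateCol (Fin.last q) w := by
    ext j m
    rcases eq_or_ne m (Fin.last q) with rfl | hm
    · simp [w]
    · simp [S, updateCol_ne hm, (hlast m).not.mpr hm]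
  have hshift : (of fun j (m : Fin (q + 1)) =>
      binomialShift c (s j) (if m.1 = q then q + 1 else m.1)) =
        (S * P).updateCol (Fin.last q) (w + S *ᵥ b) := by
    ext j m
    rcases eq_or_ne m (Fin.last q) with rfl | hm
    · simp only [of_apply, if_pos ((hlast _).mpr rfl), updateCol_self, binomialShift_succ,
        Pi.add_apply, mulVec, dotProduct, S, b, w]
    · rw [updateCol_ne hm, ← of_binomialShift_eq_mul]
      simp [(hlast m).not.mpr hm]
  have hfirst : (S.updateCol (Fin.last q) w * P).updateCol (Fin.last q) w =
      S.updateCol (Fin.last q) w * P.updateCol (Fin.last q) (Pi.single (Fin.last q) 1) := by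
    rw [mul_updateCol, mulVec_single_one]
    congr 1
    ext j
    simp [w]
  -- the last column is `w + S *ᵥ b`; against columns `0, …, q` of `S` only `b q = (q + 1) c` counts
  rw [hshift, hG, det_updateCol_add, ← mul_updateCol, det_mul,
    det_updateCol_last_binomialMatrix,
    updateCol_last_mul_binomialMatrix c S (S.updateCol (Fin.last q) w)
      (fun j i => (updateCol_ne (Fin.castSucc_ne_last i)).symm),
    hfirst, det_mul, det_updateCol_last_binomialMatrix]
  simp only [Pi.single_eq_same, mul_one, Fin.val_last, Nat.choose_succ_self_right, Nat.cast_add,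
    Nat.cast_one, add_tsub_cancel_left, pow_one, add_right_inj, b]
  ring

end Binomial

theorem hasDerivAt_det {𝕜 𝔸 n : Type*} [NontriviallyNormedField 𝕜] [NormedCommRing 𝔸]
    [NormedAlgebra 𝕜 𝔸] [Fintype n] [DecidableEq n] {M : 𝕜 → Matrix n n 𝔸}
    {M' : Matrix n n 𝔸} {x : 𝕜} (hM : ∀ i j, HasDerivAt (fun t => M t i j) (M' i j) x) :
    HasDerivAt (fun t => (M t).det) (∑ j, ((M x).updateCol j fun i => M' i j).det) x := by
  simp only [det_apply']
  have hprod : ∀ (σ : Equiv.Perm n) (j : n),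
      ∏ i, (M x).updateCol j (fun i => M' i j) (σ i) i =
        (∏ i ∈ univ.erase j, M x (σ i) i) • M' (σ j) j := by
    intro σ j
    rw [← mul_prod_erase univ _ (mem_univ j), smul_eq_mul, mul_comm]
    congr 1
    · exact prod_congr rfl fun i hi => updateCol_ne (ne_of_mem_erase hi)
    · simp
  simp_rw [hprod, sum_comm (γ := n), ← mul_sum]
  exact HasDerivAt.fun_sum fun σ _ =>
    (HasDerivAt.fun_finsetProd fun i _ => hM (σ i) i).const_mul _

theorem hasDerivAt_det_of_hasDerivAt_succ {𝕜 𝔸 : Type*} [NontriviallyNormedField 𝕜]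
    [NormedCommRing 𝔸] [NormedAlgebra 𝕜 𝔸] {N : ℕ} (hN : 1 ≤ N) {φ : Fin N → ℕ → 𝕜 → 𝔸}
    {x : 𝕜} (hφ : ∀ j l, HasDerivAt (φ j l) (φ j (l + 1) x) x) :
    HasDerivAt (fun t => (of fun j (m : Fin N) => φ j m t).det)
      (of fun j (m : Fin N) => φ j (if m.1 = N - 1 then N else m.1) x).det x := by
  obtain ⟨q, rfl⟩ : ∃ q, N = q + 1 := ⟨N - 1, by omega⟩
  convert hasDerivAt_det (M := fun t => of fun j (m : Fin (q + 1)) => φ j m t)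
    (M' := of fun j (m : Fin (q + 1)) => φ j (m + 1) x)
    fun j m => hφ j m using 1
  rw [Fin.sum_univ_castSucc, Finset.sum_eq_zero fun i _ => ?_, zero_add]
  · congr 1
    ext j m
    rcases eq_or_ne m (Fin.last q) with rfl | hm
    · simp
    · simp [updateCol_ne hm, show m.1 ≠ q from fun h => hm (Fin.ext h)]
  · refine det_zero_of_column_eq (Fin.castSucc_lt_succ (i := i)).ne fun j => ?_
    simp [updateCol_ne (Fin.castSucc_lt_succ (i := i)).ne']

theorem iteratedDeriv_eq_of_hasDerivAt_succ {𝕜 F : Type*} [NontriviallyNormedField 𝕜]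
    [NormedAddCommGroup F] [NormedSpace 𝕜 F] {φ : ℤ → 𝕜 → F}
    (hφ : ∀ l t, HasDerivAt (φ l) (φ (l + 1) t) t) (m : ℕ) (l : ℤ) :
    iteratedDeriv m (φ l) = φ (l + m) := by
  induction m generalizing l with
  | zero => simp
  | succ m ih =>
    rw [iteratedDeriv_succ', funext fun t => (hφ l t).deriv, ih]
    push_cast; ring_nf

noncomputable def psiEntry (ρp ρm k a1 a2 : ℂ) (n1 n2 l : ℤ) (x : ℝ) : ℂ :=
  ρp * Complex.exp (k * x) * k ^ l * (a1 + k) ^ n1 * (a2 + k) ^ n2 +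
    ρm * Complex.exp (-k * x) * (-k) ^ l * (a1 - k) ^ n1 * (a2 - k) ^ n2

section psiEntry

variable {ρp ρm k a1 a2 : ℂ}

theorem psiEntry_swap (n1 n2 l : ℤ) (x : ℝ) :
    psiEntry ρp ρm k a1 a2 n1 n2 l x = psiEntry ρp ρm k a2 a1 n2 n1 l x := by
  simp only [psiEntry]; ring

theorem hasDerivAt_psiEntry (hk : k ≠ 0) (n1 n2 l : ℤ) (x : ℝ) :
    HasDerivAt (psiEntry ρp ρm k a1 a2 n1 n2 l) (psiEntry ρp ρm k a1 a2 n1 n2 (l + 1) x) x := by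
  have hexp : ∀ c : ℂ, HasDerivAt (fun t : ℝ => Complex.exp (c * t)) (Complex.exp (c * x) * c) x :=
    fun c => ((hasDerivAt_id (x : ℂ)).const_mul c).cexp.comp_ofReal.congr_deriv (by simp)
  refine ((((hexp k).const_mul ρp).mul_const (k ^ l * (a1 + k) ^ n1 * (a2 + k) ^ n2)).fun_add
    (((hexp (-k)).const_mul ρm).mul_const ((-k) ^ l * (a1 - k) ^ n1 * (a2 - k) ^ n2))
    |>.congr_of_eventuallyEq (.of_forall fun t => ?_)).congr_deriv ?_
  · simp only [psiEntry]; ring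
  · simp only [psiEntry, zpow_add_one₀ hk, zpow_add_one₀ (neg_ne_zero.mpr hk)]; ring

theorem psiEntry_add_left (hk : k ≠ 0) (ha : a1 + k ≠ 0) (ha' : a1 - k ≠ 0)
    (n1 n2 l : ℤ) (m : ℕ) (x : ℝ) :
    psiEntry ρp ρm k a1 a2 (n1 + m) n2 l x =
      binomialShift a1 (fun i => psiEntry ρp ρm k a1 a2 n1 n2 (l + i) x) m := by
  set U := ρp * Complex.exp (k * x) * k ^ l * (a1 + k) ^ n1 * (a2 + k) ^ n2
  set V := ρm * Complex.exp (-k * x) * (-k) ^ l * (a1 - k) ^ n1 * (a2 - k) ^ n2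
  have hl : (fun i : ℕ => psiEntry ρp ρm k a1 a2 n1 n2 (l + i) x) =
      (fun i => U * k ^ i) + fun i => V * (-k) ^ i := by
    ext i
    simp only [psiEntry, Pi.add_apply, zpow_add₀ hk, zpow_add₀ (neg_ne_zero.mpr hk), U, V,
      zpow_natCast]
    ring
  rw [hl, binomialShift_add, binomialShift_mul_pow, binomialShift_mul_pow]
  simp only [psiEntry, Pi.add_apply, zpow_add₀ ha, zpow_add₀ ha', zpow_natCast, U, V,
    ← sub_eq_add_neg]
  ring

theorem psiEntry_add_right (hk : k ≠ 0) (ha : a2 + k ≠ 0) (ha' : a2 - k ≠ 0)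
    (n1 n2 l : ℤ) (m : ℕ) (x : ℝ) :
    psiEntry ρp ρm k a1 a2 n1 (n2 + m) l x =
      binomialShift a2 (fun i => psiEntry ρp ρm k a1 a2 n1 n2 (l + i) x) m := by
  simp only [psiEntry_swap (a1 := a1)]
  exact psiEntry_add_left hk ha ha' n2 n1 l m x

end psiEntry

/-- Lemma 3.1: the Casoratian `f = |0,…,N−1|_{[l1]}` and `g = |0,…,N−2,N|_{[l1]}` built
from the H1 entries can equally be written as Wronskians in `x` or as Casoratians in
the directions `n1`, `n2`; moreover `g = ∂_x f` and
`g = |0,…,N−2,N|_{[n_σ]} − a_σ N f` for `σ = 1,2`. -/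
theorem stmt_0 (N : ℕ) (hN : 1 ≤ N) (a1 a2 : ℂ) (k ρp ρm : Fin N → ℂ)
    (hk : ∀ j, k j ≠ 0)
    (ha1 : ∀ j, a1 + k j ≠ 0) (ha1' : ∀ j, a1 - k j ≠ 0)
    (ha2 : ∀ j, a2 + k j ≠ 0) (ha2' : ∀ j, a2 - k j ≠ 0)
    (ψ : Fin N → ℤ → ℤ → ℤ → ℝ → ℂ)
    (hψ : ∀ j n1 n2 l1 x, ψ j n1 n2 l1 x =
      ρp j * Complex.exp (k j * (x : ℂ)) * (k j) ^ l1 *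
        (a1 + k j) ^ n1 * (a2 + k j) ^ n2 +
      ρm j * Complex.exp (-(k j) * (x : ℂ)) * (-(k j)) ^ l1 *
        (a1 - k j) ^ n1 * (a2 - k j) ^ n2)
    (f g : ℤ → ℤ → ℤ → ℝ → ℂ)
    (hf : ∀ n1 n2 l1 x, f n1 n2 l1 x =
      (Matrix.of fun j m : Fin N => ψ j n1 n2 (l1 + (m.1 : ℤ)) x).det)
    (hg : ∀ n1 n2 l1 x, g n1 n2 l1 x =
      (Matrix.of fun j m : Fin N =>
        ψ j n1 n2 (l1 + (if m.1 = N - 1 then (N : ℤ) else (m.1 : ℤ))) x).det) :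
    ∀ n1 n2 l1 : ℤ, ∀ x : ℝ,
      -- (i) f as a Wronskian in x and as Casoratians in n1 and n2
      (f n1 n2 l1 x =
        (Matrix.of fun j m : Fin N =>
          iteratedDeriv m.1 (fun t => ψ j n1 n2 l1 t) x).det) ∧
      (f n1 n2 l1 x =
        (Matrix.of fun j m : Fin N => ψ j (n1 + (m.1 : ℤ)) n2 l1 x).det) ∧
      (f n1 n2 l1 x =
        (Matrix.of fun j m : Fin N => ψ j n1 (n2 + (m.1 : ℤ)) l1 x).det) ∧
      -- (ii) g as the x-Wronskian with derivative orders 0,…,N−2,N, as ∂_x f,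
      -- and as the shifted Casoratians in n1, n2 minus a_σ N f
      (g n1 n2 l1 x =
        (Matrix.of fun j m : Fin N =>
          iteratedDeriv (if m.1 = N - 1 then N else m.1)
            (fun t => ψ j n1 n2 l1 t) x).det) ∧
      (g n1 n2 l1 x = deriv (fun t => f n1 n2 l1 t) x) ∧
      (g n1 n2 l1 x =
        (Matrix.of fun j m : Fin N =>
          ψ j (n1 + (if m.1 = N - 1 then (N : ℤ) else (m.1 : ℤ))) n2 l1 x).det -
        a1 * (N : ℂ) * f n1 n2 l1 x) ∧
      (g n1 n2 l1 x =
        (Matrix.of fun j m : Fin N =>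
          ψ j n1 (n2 + (if m.1 = N - 1 then (N : ℤ) else (m.1 : ℤ))) l1 x).det -
        a2 * (N : ℂ) * f n1 n2 l1 x) := by
  intro n1 n2 l1 x
  obtain rfl : ψ = fun j => psiEntry (ρp j) (ρm j) (k j) a1 a2 :=
    funext fun j => funext fun n1 => funext fun n2 => funext fun l => funext (hψ j n1 n2 l)
  have hderiv := fun j =>
    hasDerivAt_psiEntry (ρp := ρp j) (ρm := ρm j) (a1 := a1) (a2 := a2) (hk j)
  have hiter : ∀ j (i : ℕ), iteratedDeriv i (psiEntry (ρp j) (ρm j) (k j) a1 a2 n1 n2 l1) x =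
      psiEntry (ρp j) (ρm j) (k j) a1 a2 n1 n2 (l1 + i) x := fun j i =>
    congrFun (iteratedDeriv_eq_of_hasDerivAt_succ (hderiv j n1 n2) i l1) x
  have hshift1 := fun j =>
    psiEntry_add_left (ρp := ρp j) (ρm := ρm j) (a2 := a2) (hk j) (ha1 j) (ha1' j)
  have hshift2 := fun j =>
    psiEntry_add_right (ρp := ρp j) (ρm := ρm j) (a1 := a1) (hk j) (ha2 j) (ha2' j)
  have hcast : ∀ m : Fin N, (if m.1 = N - 1 then (N : ℤ) else (m.1 : ℤ)) =
      ((if m.1 = N - 1 then N else m.1 : ℕ) : ℤ) := fun m => by push_cast; rfl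
  simp only [hf, hg, hcast, hiter, hshift1, hshift2, det_of_binomialShift,
    det_of_binomialShift_gap, true_and]
  refine ⟨?_, by ring, by ring⟩
  refine (HasDerivAt.deriv (hasDerivAt_det_of_hasDerivAt_succ hN
    (φ := fun j i t => psiEntry (ρp j) (ρm j) (k j) a1 a2 n1 n2 (l1 + i) t) fun j i => ?_)).symm
  rw [Nat.cast_succ, ← add_assoc]
  exact hderiv j n1 n2 _ x
end

section
/- Let a1, a2, γ0 ∈ ℂ and let f, g : ℤ² → ℂ with f(n1,n2) ≠ 0 for all (n1,n2). Suppose that at every (n1,n2) the bilinear H1 system holds: g_2 f_1 − g_1 f_2 + (a1 − a2)(f_1 f_2 − f f_12) = 0 and g f_12 − g_12 f + (a1 + a2)(f f_12 − f_1 f_2) = 0. Then u(n1,n2) := a1 n1 + a2 n2 + γ0 − g(n1,n2)/f(n1,n2) satisfies the H1 lattice equation (u − u_12)(u_1 − u_2) − (a2² − a1²) = 0 at every (n1,n2). -/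
/-!
Dividing each bilinear equation by the product of the two `f`-values it pairs shows that the
differences of `u` along the two diagonals of an elementary square factor as
`u - u₁₂ = -(a₁ + a₂) f₁ f₂ / (f f₁₂)` and `u₁ - u₂ = (a₁ - a₂) f f₁₂ / (f₁ f₂)`.
The two ratios of `f`-values are mutually inverse, so their product is `a₂² - a₁²`.
-/

theorem div_sub_div_eq_of_bilinear {K : Type*} [Field K] {gA gB fA fB c P : K}
    (hA : fA ≠ 0) (hB : fB ≠ 0) (h : gA * fB - gB * fA + c * (fA * fB - P) = 0) :
    gA / fA - gB / fB = c * (P / (fA * fB) - 1) := by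
  field_simp
  linear_combination h

/-- If `f, g` (with `f` nonvanishing) satisfy the bilinear H1 system, then
`u = a1 n1 + a2 n2 + γ0 − g/f` satisfies the H1 lattice equation. -/
theorem stmt_2 (a1 a2 γ0 : ℂ) (f g : ℤ → ℤ → ℂ)
    (hf : ∀ n1 n2, f n1 n2 ≠ 0)
    (hbe1 : ∀ n1 n2 : ℤ,
      g n1 (n2 + 1) * f (n1 + 1) n2 - g (n1 + 1) n2 * f n1 (n2 + 1) +
        (a1 - a2) * (f (n1 + 1) n2 * f n1 (n2 + 1) -
          f n1 n2 * f (n1 + 1) (n2 + 1)) = 0)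
    (hbe2 : ∀ n1 n2 : ℤ,
      g n1 n2 * f (n1 + 1) (n2 + 1) - g (n1 + 1) (n2 + 1) * f n1 n2 +
        (a1 + a2) * (f n1 n2 * f (n1 + 1) (n2 + 1) -
          f (n1 + 1) n2 * f n1 (n2 + 1)) = 0)
    (u : ℤ → ℤ → ℂ)
    (hu : ∀ n1 n2 : ℤ, u n1 n2 =
      a1 * n1 + a2 * n2 + γ0 - g n1 n2 / f n1 n2) :
    ∀ n1 n2 : ℤ,
      (u n1 n2 - u (n1 + 1) (n2 + 1)) * (u (n1 + 1) n2 - u n1 (n2 + 1)) -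
        (a2 ^ 2 - a1 ^ 2) = 0 := by
  intro n1 n2
  have h00 := hf n1 n2
  have h10 := hf (n1 + 1) n2
  have h01 := hf n1 (n2 + 1)
  have h11 := hf (n1 + 1) (n2 + 1)
  have hdiag : u n1 n2 - u (n1 + 1) (n2 + 1) =
      -(a1 + a2) * (f (n1 + 1) n2 * f n1 (n2 + 1) / (f n1 n2 * f (n1 + 1) (n2 + 1))) := by
    rw [hu, hu]
    push_cast
    linear_combination -div_sub_div_eq_of_bilinear h00 h11 (hbe2 n1 n2)
  have hbe1' := hbe1 n1 n2
  rw [mul_comm (f (n1 + 1) n2) (f n1 (n2 + 1))] at hbe1'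
  have hanti : u (n1 + 1) n2 - u n1 (n2 + 1) =
      (a1 - a2) * (f n1 n2 * f (n1 + 1) (n2 + 1) / (f (n1 + 1) n2 * f n1 (n2 + 1))) := by
    rw [hu, hu]
    push_cast
    linear_combination div_sub_div_eq_of_bilinear h01 h10 hbe1'
  rw [hdiag, hanti]
  field_simp
  ring
end

section
/- Let a1, a2, γ0 ∈ ℂ and let f : ℤ² × ℝ → ℂ be twice differentiable in x with f(n1,n2,x) ≠ 0 for all (n1,n2,x). Suppose that at every point the bilinear H2 system holds: (∂_x² f) f_1 − 2(∂_x f)(∂_x f_1) + f(∂_x² f_1) + 2a1((∂_x f) f_1 − f(∂_x f_1)) = 0 and (∂_x² f) f_2 − 2(∂_x f)(∂_x f_2) + f(∂_x² f_2) + 2a2((∂_x f) f_2 − f(∂_x f_2)) = 0. Then, with Z = a1 n1 + a2 n2 + γ0, the function u = Z² − 2Z (∂_x f)/f + (∂_x² f)/f satisfies the H2 lattice equation (u − u_12)(u_1 − u_2) + (a1² − a2²)(u + u_1 + u_2 + u_12 − a1² − a2²) = 0 at every (n1,n2,x). -/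
/-!
Write `v = ∂ₓf / f` and `Z = a1 n1 + a2 n2 + γ0`. Then `u = r + q²` with `r = ∂ₓ²f/f - v²`
and `q = v - Z`, and dividing each bilinear equation by `f f_i` turns it into the edge relation
`r + r_i + (q - q_i)² = a_i²`. Eliminating the `r`'s around an elementary square leaves
`(q - q_12)(q_1 - q_2) + a1² - a2² = 0`, and the left side of the H2 equation is `4 q q_1` times this.
-/

def IsH2Solution {R : Type*} [CommRing R] (a1 a2 : R) (u : ℤ → ℤ → R) : Prop :=
  ∀ n1 n2 : ℤ,
    (u n1 n2 - u (n1 + 1) (n2 + 1)) * (u (n1 + 1) n2 - u n1 (n2 + 1)) +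
      (a1 ^ 2 - a2 ^ 2) * (u n1 n2 + u (n1 + 1) n2 + u n1 (n2 + 1) +
        u (n1 + 1) (n2 + 1) - a1 ^ 2 - a2 ^ 2) = 0

theorem isH2Solution_of_edge_relations {R : Type*} [CommRing R] {a1 a2 : R}
    {r q u : ℤ → ℤ → R} (hu : ∀ n1 n2, u n1 n2 = r n1 n2 + q n1 n2 ^ 2)
    (h1 : ∀ n1 n2, r n1 n2 + r (n1 + 1) n2 + (q n1 n2 - q (n1 + 1) n2) ^ 2 = a1 ^ 2)
    (h2 : ∀ n1 n2, r n1 n2 + r n1 (n2 + 1) + (q n1 n2 - q n1 (n2 + 1)) ^ 2 = a2 ^ 2) :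
    IsH2Solution a1 a2 u := by
  intro n1 n2
  have hr1 : r (n1 + 1) n2 = a1 ^ 2 - r n1 n2 - (q n1 n2 - q (n1 + 1) n2) ^ 2 := by
    linear_combination h1 n1 n2
  have hr2 : r n1 (n2 + 1) = a2 ^ 2 - r n1 n2 - (q n1 n2 - q n1 (n2 + 1)) ^ 2 := by
    linear_combination h2 n1 n2
  have hr12 : r (n1 + 1) (n2 + 1) =
      a2 ^ 2 - r (n1 + 1) n2 - (q (n1 + 1) n2 - q (n1 + 1) (n2 + 1)) ^ 2 := by
    linear_combination h2 (n1 + 1) n2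
  have closing := h1 n1 (n2 + 1)
  rw [hr12, hr1, hr2] at closing
  rw [hu, hu, hu, hu, hr12, hr1, hr2]
  linear_combination (-2 * q n1 n2 * q (n1 + 1) n2) * closing

theorem edge_relation_of_bilinear {K : Type*} [Field K] {a f g f' g' f'' g'' : K}
    (hf : f ≠ 0) (hg : g ≠ 0)
    (h : f'' * g - 2 * f' * g' + f * g'' + 2 * a * (f' * g - f * g') = 0) :
    (f'' / f - (f' / f) ^ 2) + (g'' / g - (g' / g) ^ 2) + (f' / f - g' / g + a) ^ 2 = a ^ 2 := by
  field_simp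
  linear_combination f * g * h

theorem stmt_6_general (a1 a2 γ0 : ℂ) (f : ℤ → ℤ → ℝ → ℂ)
    (hf : ∀ n1 n2 x, f n1 n2 x ≠ 0)
    (hbe1 : ∀ n1 n2 : ℤ, ∀ x : ℝ,
      deriv (deriv (f n1 n2)) x * f (n1 + 1) n2 x -
        2 * deriv (f n1 n2) x * deriv (f (n1 + 1) n2) x +
        f n1 n2 x * deriv (deriv (f (n1 + 1) n2)) x +
        2 * a1 * (deriv (f n1 n2) x * f (n1 + 1) n2 x -
          f n1 n2 x * deriv (f (n1 + 1) n2) x) = 0)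
    (hbe2 : ∀ n1 n2 : ℤ, ∀ x : ℝ,
      deriv (deriv (f n1 n2)) x * f n1 (n2 + 1) x -
        2 * deriv (f n1 n2) x * deriv (f n1 (n2 + 1)) x +
        f n1 n2 x * deriv (deriv (f n1 (n2 + 1))) x +
        2 * a2 * (deriv (f n1 n2) x * f n1 (n2 + 1) x -
          f n1 n2 x * deriv (f n1 (n2 + 1)) x) = 0)
    (u : ℤ → ℤ → ℝ → ℂ)
    (hu : ∀ n1 n2 : ℤ, ∀ x : ℝ, u n1 n2 x =
      (a1 * n1 + a2 * n2 + γ0) ^ 2 -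
        2 * (a1 * n1 + a2 * n2 + γ0) * (deriv (f n1 n2) x / f n1 n2 x) +
        deriv (deriv (f n1 n2)) x / f n1 n2 x) :
    ∀ n1 n2 : ℤ, ∀ x : ℝ,
      (u n1 n2 x - u (n1 + 1) (n2 + 1) x) * (u (n1 + 1) n2 x - u n1 (n2 + 1) x) +
        (a1 ^ 2 - a2 ^ 2) * (u n1 n2 x + u (n1 + 1) n2 x + u n1 (n2 + 1) x +
          u (n1 + 1) (n2 + 1) x - a1 ^ 2 - a2 ^ 2) = 0 := by
  intro n1 n2 x
  refine isH2Solution_of_edge_relations (u := fun m1 m2 => u m1 m2 x)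
    (r := fun m1 m2 => deriv (deriv (f m1 m2)) x / f m1 m2 x - (deriv (f m1 m2) x / f m1 m2 x) ^ 2)
    (q := fun m1 m2 => deriv (f m1 m2) x / f m1 m2 x - (a1 * m1 + a2 * m2 + γ0))
    (fun m1 m2 => ?_) (fun m1 m2 => ?_) (fun m1 m2 => ?_) n1 n2
  · rw [hu]
    ring
  · push_cast
    linear_combination edge_relation_of_bilinear (hf m1 m2 x) (hf (m1 + 1) m2 x) (hbe1 m1 m2 x)
  · push_cast
    linear_combination edge_relation_of_bilinear (hf m1 m2 x) (hf m1 (m2 + 1) x) (hbe2 m1 m2 x)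

/-- If `f` (nonvanishing, twice differentiable in `x`) satisfies the bilinear H2 system,
then `u = Z² − 2Z (∂ₓf)/f + (∂ₓ²f)/f` with `Z = a1 n1 + a2 n2 + γ0` satisfies the H2
lattice equation. -/
theorem stmt_6 (a1 a2 γ0 : ℂ) (f : ℤ → ℤ → ℝ → ℂ)
    (hdiff : ∀ n1 n2, Differentiable ℝ (f n1 n2))
    (hdiff2 : ∀ n1 n2, Differentiable ℝ (deriv (f n1 n2)))
    (hf : ∀ n1 n2 x, f n1 n2 x ≠ 0)
    (hbe1 : ∀ n1 n2 : ℤ, ∀ x : ℝ,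
      deriv (deriv (f n1 n2)) x * f (n1 + 1) n2 x -
        2 * deriv (f n1 n2) x * deriv (f (n1 + 1) n2) x +
        f n1 n2 x * deriv (deriv (f (n1 + 1) n2)) x +
        2 * a1 * (deriv (f n1 n2) x * f (n1 + 1) n2 x -
          f n1 n2 x * deriv (f (n1 + 1) n2) x) = 0)
    (hbe2 : ∀ n1 n2 : ℤ, ∀ x : ℝ,
      deriv (deriv (f n1 n2)) x * f n1 (n2 + 1) x -
        2 * deriv (f n1 n2) x * deriv (f n1 (n2 + 1)) x +
        f n1 n2 x * deriv (deriv (f n1 (n2 + 1))) x +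
        2 * a2 * (deriv (f n1 n2) x * f n1 (n2 + 1) x -
          f n1 n2 x * deriv (f n1 (n2 + 1)) x) = 0)
    (u : ℤ → ℤ → ℝ → ℂ)
    (hu : ∀ n1 n2 : ℤ, ∀ x : ℝ, u n1 n2 x =
      (a1 * n1 + a2 * n2 + γ0) ^ 2 -
        2 * (a1 * n1 + a2 * n2 + γ0) * (deriv (f n1 n2) x / f n1 n2 x) +
        deriv (deriv (f n1 n2)) x / f n1 n2 x) :
    ∀ n1 n2 : ℤ, ∀ x : ℝ,
      (u n1 n2 x - u (n1 + 1) (n2 + 1) x) * (u (n1 + 1) n2 x - u n1 (n2 + 1) x) +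
        (a1 ^ 2 - a2 ^ 2) * (u n1 n2 x + u (n1 + 1) n2 x + u n1 (n2 + 1) x +
          u (n1 + 1) (n2 + 1) x - a1 ^ 2 - a2 ^ 2) = 0 :=
  stmt_6_general a1 a2 γ0 f hf hbe1 hbe2 u hu
end

section
/- Let τ(n1,n2,n3) be the Casoratian in the direction n1 of the vector ψ with entries ψ_j(n1,n2,n3) = ρ_j^+ ∏_{i=1}^3 (a_i+k_j)^{n_i} + ρ_j^- ∏_{i=1}^3 (a_i−k_j)^{n_i}. Then τ satisfies the discrete AKP (Hirota–Miwa) equation at every point: (a1−a2) τ_3 τ_12 + (a2−a3) τ_1 τ_23 + (a3−a1) τ_2 τ_13 = 0. -/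
/-!
Let `G` be the `N × (N + 2)` Casoratian window `(ψ_j(n₁ + m, n₂, n₃))` and let `D(x, y)` be the
determinant of `G` bordered by two extra rows `x, y`. Since `ψ` is a sum of two plane waves,
`ψ(n₂ + 1) = ψ(n₁ + 1) - (a₁ - a₂) ψ` and `ψ(n₃ + 1) = ψ(n₁ + 1) - (a₁ - a₃) ψ`. The column
operation `col m ↦ col m - t • col (m - 1)` has determinant one and turns the geometric row
`(tᵐ)` into the first unit row, so with `b = a₁ - a₂`, `c = a₁ - a₃` all six shifted Casoratians
are, up to a common sign and scalar factors, values of `D` at pairs of the rows `e₀`, `e_{N+1}`,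
`(bᵐ)`, `(cᵐ)`.
The Hirota–Miwa equation is then the three-term Plücker relation for `D`, which comes from the
Laplace expansion of a determinant with a repeated column.
-/

open Matrix

section Bordered

variable {R : Type*} [CommRing R]

def shiftSub {n : ℕ} (t : R) (v : Fin (n + 1) → R) : Fin n → R :=
  fun m => v m.succ - t * v m.castSucc

def shiftSubRows {ι : Type*} {n : ℕ} (t : R) (A : ι → Fin (n + 1) → R) : ι → Fin n → R :=
  fun j => shiftSub t (A j)

def geomVec {n : ℕ} (t : R) : Fin n → R := fun m => t ^ (m : ℕ)

def shiftSubMatrix (n : ℕ) (t : R) : Matrix (Fin (n + 1)) (Fin (n + 1)) R :=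
  of fun i j => if i = j then 1 else if (i : ℕ) + 1 = j then -t else 0

theorem det_shiftSubMatrix (n : ℕ) (t : R) : (shiftSubMatrix n t).det = 1 := by
  rw [det_of_isUpperTriangular]
  · simp [shiftSubMatrix]
  · intro i j hji
    simp only [id, Fin.lt_def] at hji
    have hij : i ≠ j := fun h => by simp [h] at hji
    have hsucc : (i : ℕ) + 1 ≠ j := by omega
    simp [shiftSubMatrix, hij, hsucc]

theorem shiftSubMatrix_col_succ {n : ℕ} (t : R) (m : Fin n) :
    (fun i => shiftSubMatrix n t i m.succ) = Pi.single m.succ 1 - t • Pi.single m.castSucc 1 := by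
  ext i
  by_cases h1 : i = m.succ
  · simp [h1, shiftSubMatrix, Fin.ext_iff]
  by_cases h2 : i = m.castSucc
  · simp [h2, shiftSubMatrix, Fin.ext_iff]
  have h3 : (i : ℕ) ≠ m := fun h => h2 (Fin.ext h)
  simp [shiftSubMatrix, h1, h2, h3]

theorem vecMul_shiftSubMatrix {n : ℕ} (t : R) (v : Fin (n + 1) → R) :
    v ᵥ* shiftSubMatrix n t = Fin.cons (v 0) (shiftSub t v) := by
  ext j
  cases j using Fin.cases with
  | zero => simp [vecMul, dotProduct, shiftSubMatrix]
  | succ m =>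
    rw [vecMul, shiftSubMatrix_col_succ]
    simp [dotProduct_sub, shiftSub]

theorem shiftSub_geomVec {n : ℕ} (t s : R) :
    shiftSub t (geomVec s : Fin (n + 1) → R) = (s - t) • geomVec s := by
  ext m
  simp only [shiftSub, geomVec, Fin.val_succ, Fin.val_castSucc, Pi.smul_apply, smul_eq_mul]
  ring

theorem shiftSub_single_zero {n : ℕ} (t : R) :
    shiftSub t (Pi.single 0 1 : Fin (n + 2) → R) = -t • Pi.single 0 1 := by
  ext m
  cases m using Fin.cases with
  | zero => simp [shiftSub]
  | succ m => simp [shiftSub, Fin.succ_ne_zero]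

theorem shiftSub_single_last {n : ℕ} (t : R) :
    shiftSub t (Pi.single (Fin.last (n + 1)) 1 : Fin (n + 2) → R) = Pi.single (Fin.last n) 1 := by
  ext m
  have hm : (m : ℕ) ≠ n + 1 := m.is_lt.ne
  simp [shiftSub, Pi.single_apply, Fin.ext_iff, hm]

theorem det_vecCons {n : ℕ} (v : Fin (n + 1) → R) (A : Fin n → Fin (n + 1) → R) :
    (of (vecCons v A)).det =
      ∑ j : Fin (n + 1), (-1) ^ (j : ℕ) * v j * ((of A).submatrix id j.succAbove).det := by
  rw [det_succ_row_zero]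
  rfl

theorem det_vecCons_smul {n : ℕ} (c : R) (v : Fin (n + 1) → R)
    (A : Fin n → Fin (n + 1) → R) :
    (of (vecCons (c • v) A)).det = c * (of (vecCons v A)).det := by
  simp only [det_vecCons, Finset.mul_sum, Pi.smul_apply, smul_eq_mul]
  exact Finset.sum_congr rfl fun _ _ => by ring

theorem det_vecCons_single {n : ℕ} (k : Fin (n + 1)) (A : Fin n → Fin (n + 1) → R) :
    (of (vecCons (Pi.single k 1) A)).det =
      (-1) ^ (k : ℕ) * ((of A).submatrix id k.succAbove).det := by
  rw [det_vecCons, Finset.sum_eq_single k]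
  · simp
  · intro j _ hj
    simp [hj]
  · simp

theorem det_vecCons_geomVec {n : ℕ} (t : R) (A : Fin n → Fin (n + 1) → R) :
    (of (vecCons (geomVec t) A)).det = (of (shiftSubRows t A)).det := by
  have hv : geomVec t ᵥ* shiftSubMatrix n t = Pi.single 0 1 := by
    rw [vecMul_shiftSubMatrix]
    ext j
    cases j using Fin.cases with
    | zero => simp [geomVec]
    | succ m => simp [geomVec, shiftSub, pow_succ, mul_comm]
  rw [← mul_one (of (vecCons _ A)).det, ← det_shiftSubMatrix n t, ← det_mul, cons_mul, hv,
    det_vecCons_single]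
  simp only [Fin.val_zero, pow_zero, one_mul, Fin.succAbove_zero]
  congr 1
  ext i j
  change (A i ᵥ* shiftSubMatrix n t) j.succ = _
  rw [vecMul_shiftSubMatrix]
  rfl

theorem sum_signed_minor_mul_eq_zero {m : ℕ} (r : Fin (m + 1) → Fin m → R) (s : Fin m) :
    ∑ i : Fin (m + 1), (-1) ^ (i : ℕ) * ((of r).submatrix i.succAbove id).det * r i s = 0 := by
  have hcol : (of fun i => (Fin.cons (r i s) (r i) : Fin (m + 1) → R)).det = 0 :=
    det_zero_of_column_eq (Fin.succ_ne_zero s).symm fun i => by simp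
  have hminor (i : Fin (m + 1)) :
      (of fun i => (Fin.cons (r i s) (r i) : Fin (m + 1) → R)).submatrix i.succAbove Fin.succ =
        (of r).submatrix i.succAbove id := by
    ext; simp
  simpa [det_succ_column_zero, hminor, mul_right_comm _ (r _ s)] using hcol

def borderedDet {n : ℕ} (G : Fin n → Fin (n + 2) → R) (x y : Fin (n + 2) → R) : R :=
  (of (vecCons x (vecCons y G))).det

variable {n : ℕ} (G : Fin n → Fin (n + 2) → R)

theorem borderedDet_eq_sum (x y : Fin (n + 2) → R) :
    borderedDet G x y =
      ∑ s, x s * ((-1) ^ (s : ℕ) * ((of (vecCons y G)).submatrix id s.succAbove).det) := by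
  rw [borderedDet, det_vecCons]
  exact Finset.sum_congr rfl fun _ _ => by ring

theorem borderedDet_row_left (j : Fin n) (y : Fin (n + 2) → R) : borderedDet G (G j) y = 0 :=
  det_zero_of_row_eq (i := 0) (j := j.succ.succ) (by simp [Fin.ext_iff]) rfl

theorem borderedDet_pluecker (x y z w : Fin (n + 2) → R) :
    borderedDet G x y * borderedDet G z w - borderedDet G x w * borderedDet G z y +
      borderedDet G x z * borderedDet G w y = 0 := by
  -- `borderedDet G · y` is linear and kills the rows of `G`; apply it to the linear relation
  -- `sum_signed_minor_mul_eq_zero` among the `n + 3` rows `x, z, w, G`.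
  set r : Fin (n + 3) → Fin (n + 2) → R := vecCons x (vecCons z (vecCons w G))
  have key : ∑ i : Fin (n + 3),
      (-1) ^ (i : ℕ) * ((of r).submatrix i.succAbove id).det * borderedDet G (r i) y = 0 := by
    simp only [borderedDet_eq_sum, Finset.mul_sum, ← mul_assoc]
    rw [Finset.sum_comm]
    simp only [← Finset.sum_mul, sum_signed_minor_mul_eq_zero, zero_mul, Finset.sum_const_zero]
  have minor0 : ((of r).submatrix (Fin.succAbove 0) id).det = borderedDet G z w := rfl
  have minor1 : ((of r).submatrix (Fin.succAbove 1) id).det = borderedDet G x w := by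
    congr 1; ext i j; cases i using Fin.cases <;> rfl
  have minor2 : ((of r).submatrix (Fin.succAbove 2) id).det = borderedDet G x z := by
    congr 1; ext i j
    cases i using Fin.cases with
    | zero => rfl
    | succ i => cases i using Fin.cases <;> rfl
  rw [Fin.sum_univ_succ, Fin.sum_univ_succ, Fin.sum_univ_succ,
    Finset.sum_eq_zero fun i _ => by rw [show r _ = G i from rfl, borderedDet_row_left, mul_zero]]
    at key
  simp only [Fin.succ_zero_eq_one, Fin.succ_one_eq_two, minor0, minor1, minor2, Fin.val_zero,
    Fin.val_one, Fin.val_two] at key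
  rw [show r 0 = x from rfl, show r 1 = z from rfl, show r 2 = w from rfl] at key
  linear_combination key

theorem borderedDet_geomVec_left (t : R) (y : Fin (n + 2) → R) :
    borderedDet G (geomVec t) y = (of (vecCons (shiftSub t y) (shiftSubRows t G))).det := by
  rw [borderedDet, det_vecCons_geomVec]
  congr 1
  ext i
  cases i using Fin.cases <;> rfl

theorem borderedDet_geomVec_single_last (t : R) :
    borderedDet G (geomVec t) (Pi.single (Fin.last (n + 1)) 1) =
      (-1) ^ n * ((of (shiftSubRows t G)).submatrix id Fin.castSucc).det := by
  rw [borderedDet_geomVec_left, shiftSub_single_last, det_vecCons_single, Fin.val_last,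
    Fin.succAbove_last]

theorem borderedDet_geomVec_single_zero (t : R) :
    borderedDet G (geomVec t) (Pi.single 0 1) =
      -t * ((of (shiftSubRows t G)).submatrix id Fin.succ).det := by
  rw [borderedDet_geomVec_left, shiftSub_single_zero, det_vecCons_smul, det_vecCons_single]
  simp

theorem borderedDet_geomVec_geomVec (b c : R) :
    borderedDet G (geomVec b) (geomVec c) =
      (c - b) * (of (shiftSubRows c (shiftSubRows b G))).det := by
  rw [borderedDet_geomVec_left, shiftSub_geomVec, det_vecCons_smul, det_vecCons_geomVec]

theorem borderedDet_single_zero_single_last :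
    borderedDet G (Pi.single 0 1) (Pi.single (Fin.last (n + 1)) 1) =
      (-1) ^ n * (((of G).submatrix id Fin.succ).submatrix id Fin.castSucc).det := by
  rw [borderedDet, det_vecCons_single]
  simp only [Fin.val_zero, pow_zero, one_mul, Fin.succAbove_zero]
  have htail : (of (vecCons (Pi.single (Fin.last (n + 1)) 1) G)).submatrix id Fin.succ =
      of (vecCons (Pi.single (Fin.last n) 1) fun j m => G j m.succ) := by
    ext i j
    cases i using Fin.cases with
    | zero => simp [Pi.single_apply, Fin.ext_iff]
    | succ i => rfl
  rw [htail, det_vecCons_single, Fin.val_last, Fin.succAbove_last]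
  rfl

theorem hirotaMiwa_det_shiftSubRows (b c : R) :
    b * ((of (shiftSubRows c G)).submatrix id Fin.castSucc).det *
        ((of (shiftSubRows b G)).submatrix id Fin.succ).det +
      (c - b) * (((of G).submatrix id Fin.succ).submatrix id Fin.castSucc).det *
        (of (shiftSubRows c (shiftSubRows b G))).det -
      c * ((of (shiftSubRows b G)).submatrix id Fin.castSucc).det *
        ((of (shiftSubRows c G)).submatrix id Fin.succ).det = 0 := by
  have h := borderedDet_pluecker G (geomVec b) (Pi.single (Fin.last (n + 1)) 1) (geomVec c)
    (Pi.single 0 1)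
  rw [borderedDet_geomVec_single_last, borderedDet_geomVec_single_last,
    borderedDet_geomVec_single_zero, borderedDet_geomVec_single_zero,
    borderedDet_geomVec_geomVec, borderedDet_single_zero_single_last] at h
  exact neg_one_pow_mul_eq_zero_iff.mp (by linear_combination h)

end Bordered

section Casoratian

variable {α ι : Type*}

def casoratiRows (f : ι → ℤ → α) (n : ℤ) (k : ℕ) : ι → Fin k → α :=
  fun j m => f j (n + m)

theorem submatrix_castSucc_casoratiRows (f : ι → ℤ → α) (n : ℤ) (k : ℕ) :
    (of (casoratiRows f n (k + 1))).submatrix id Fin.castSucc = of (casoratiRows f n k) := by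
  ext j m
  simp [casoratiRows]

theorem submatrix_succ_casoratiRows (f : ι → ℤ → α) (n : ℤ) (k : ℕ) :
    (of (casoratiRows f n (k + 1))).submatrix id Fin.succ = of (casoratiRows f (n + 1) k) := by
  ext j m
  simp [casoratiRows, add_comm, add_left_comm]

theorem shiftSubRows_casoratiRows {R : Type*} [CommRing R] (t : R) (f : ι → ℤ → R) (n : ℤ)
    (k : ℕ) : shiftSubRows t (casoratiRows f n (k + 1)) =
      casoratiRows (fun j p => f j (p + 1) - t * f j p) n k := by
  ext j m
  simp [shiftSubRows, shiftSub, casoratiRows, add_assoc]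

theorem casoratian_hirotaMiwa {R : Type*} [CommRing R] {N : ℕ} (a1 a2 a3 : R)
    (φ : Fin N → ℤ → ℤ → ℤ → R)
    (h2 : ∀ j p q r, φ j (p + 1) q r - (a1 - a2) * φ j p q r = φ j p (q + 1) r)
    (h3 : ∀ j p q r, φ j (p + 1) q r - (a1 - a3) * φ j p q r = φ j p q (r + 1))
    (τ : ℤ → ℤ → ℤ → R)
    (hτ : ∀ n1 n2 n3, τ n1 n2 n3 = (of (casoratiRows (fun j p => φ j p n2 n3) n1 N)).det)
    (n1 n2 n3 : ℤ) :
    (a1 - a2) * τ n1 n2 (n3 + 1) * τ (n1 + 1) (n2 + 1) n3 +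
      (a2 - a3) * τ (n1 + 1) n2 n3 * τ n1 (n2 + 1) (n3 + 1) +
      (a3 - a1) * τ n1 (n2 + 1) n3 * τ (n1 + 1) n2 (n3 + 1) = 0 := by
  have h := hirotaMiwa_det_shiftSubRows (casoratiRows (fun j p => φ j p n2 n3) n1 (N + 2))
    (a1 - a2) (a1 - a3)
  simp only [shiftSubRows_casoratiRows, h2, h3, submatrix_castSucc_casoratiRows,
    submatrix_succ_casoratiRows] at h
  simp only [hτ]
  linear_combination h

end Casoratian

theorem stmt_12_general (N : ℕ) (a1 a2 a3 : ℂ) (k ρp ρm : Fin N → ℂ)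
    (ha1 : ∀ j, a1 + k j ≠ 0) (ha1' : ∀ j, a1 - k j ≠ 0)
    (ha2 : ∀ j, a2 + k j ≠ 0) (ha2' : ∀ j, a2 - k j ≠ 0)
    (ha3 : ∀ j, a3 + k j ≠ 0) (ha3' : ∀ j, a3 - k j ≠ 0)
    (ψ : Fin N → ℤ → ℤ → ℤ → ℂ)
    (hψ : ∀ j n1 n2 n3, ψ j n1 n2 n3 =
      ρp j * (a1 + k j) ^ n1 * (a2 + k j) ^ n2 * (a3 + k j) ^ n3 +
      ρm j * (a1 - k j) ^ n1 * (a2 - k j) ^ n2 * (a3 - k j) ^ n3)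
    (τ : ℤ → ℤ → ℤ → ℂ)
    (hτ : ∀ n1 n2 n3, τ n1 n2 n3 =
      (Matrix.of fun j m : Fin N => ψ j (n1 + (m.1 : ℤ)) n2 n3).det) :
    ∀ n1 n2 n3 : ℤ,
      (a1 - a2) * τ n1 n2 (n3 + 1) * τ (n1 + 1) (n2 + 1) n3 +
      (a2 - a3) * τ (n1 + 1) n2 n3 * τ n1 (n2 + 1) (n3 + 1) +
      (a3 - a1) * τ n1 (n2 + 1) n3 * τ (n1 + 1) n2 (n3 + 1) = 0 := by
  have h2 : ∀ j p q r, ψ j (p + 1) q r - (a1 - a2) * ψ j p q r = ψ j p (q + 1) r := by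
    intro j p q r
    rw [hψ, hψ, hψ, zpow_add_one₀ (ha1 j), zpow_add_one₀ (ha1' j), zpow_add_one₀ (ha2 j),
      zpow_add_one₀ (ha2' j)]
    ring
  have h3 : ∀ j p q r, ψ j (p + 1) q r - (a1 - a3) * ψ j p q r = ψ j p q (r + 1) := by
    intro j p q r
    rw [hψ, hψ, hψ, zpow_add_one₀ (ha1 j), zpow_add_one₀ (ha1' j), zpow_add_one₀ (ha3 j),
      zpow_add_one₀ (ha3' j)]
    ring
  exact casoratian_hirotaMiwa a1 a2 a3 ψ h2 h3 τ hτ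

/-- The Casoratian (in direction `n1`) built from dKdV-type plane-wave entries
satisfies the discrete AKP (Hirota–Miwa) equation. -/
theorem stmt_12 (N : ℕ) (hN : 1 ≤ N) (a1 a2 a3 : ℂ) (k ρp ρm : Fin N → ℂ)
    (ha1 : ∀ j, a1 + k j ≠ 0) (ha1' : ∀ j, a1 - k j ≠ 0)
    (ha2 : ∀ j, a2 + k j ≠ 0) (ha2' : ∀ j, a2 - k j ≠ 0)
    (ha3 : ∀ j, a3 + k j ≠ 0) (ha3' : ∀ j, a3 - k j ≠ 0)
    (ψ : Fin N → ℤ → ℤ → ℤ → ℂ)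
    (hψ : ∀ j n1 n2 n3, ψ j n1 n2 n3 =
      ρp j * (a1 + k j) ^ n1 * (a2 + k j) ^ n2 * (a3 + k j) ^ n3 +
      ρm j * (a1 - k j) ^ n1 * (a2 - k j) ^ n2 * (a3 - k j) ^ n3)
    (τ : ℤ → ℤ → ℤ → ℂ)
    (hτ : ∀ n1 n2 n3, τ n1 n2 n3 =
      (Matrix.of fun j m : Fin N => ψ j (n1 + (m.1 : ℤ)) n2 n3).det) :
    ∀ n1 n2 n3 : ℤ,
      (a1 - a2) * τ n1 n2 (n3 + 1) * τ (n1 + 1) (n2 + 1) n3 +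
      (a2 - a3) * τ (n1 + 1) n2 n3 * τ n1 (n2 + 1) (n3 + 1) +
      (a3 - a1) * τ n1 (n2 + 1) n3 * τ (n1 + 1) n2 (n3 + 1) = 0 :=
  stmt_12_general N a1 a2 a3 k ρp ρm ha1 ha1' ha2 ha2' ha3 ha3' ψ hψ τ hτ
end
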